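/- Every graph G of order at least two with at least m(|V(G)|-1) edges contains an m-tree-connected subgraph with at least two vertices. -/

import Mathlib

open SimpleGraph

def IsTreeConn {V : Type*} (m : ℕ) (G : SimpleGraph V) : Prop :=
  ∃ T : Fin m → SimpleGraph V, (∀ i, T i ≤ G) ∧ (∀ i, (T i).IsTree) ∧
    ∀ i j, i ≠ j → Disjoint (T i).edgeSet (T j).edgeSet

noncomputable def eIn {V : Type*} (G : SimpleGraph V) (S : Set V) : ℕ :=
  {e ∈ G.edgeSet | ∀ v ∈ e, v ∈ S}.ncard

def IsSparse {V : Type*} (m : ℕ) (G : SimpleGraph V) : Prop :=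
  ∀ S : Set V, S.Nonempty → (eIn G S : ℤ) ≤ m * S.ncard - m

def mComp {V : Type*} (m : ℕ) (G : SimpleGraph V) (v : V) : Set V :=
  ⋃₀ {X : Set V | v ∈ X ∧ IsTreeConn m (G.induce X)}

noncomputable def crossE {V : Type*} (m : ℕ) (G : SimpleGraph V) : ℕ :=
  {e ∈ G.edgeSet | ∃ u ∈ e, ∃ w ∈ e, mComp m G u ≠ mComp m G w}.ncard

noncomputable def Omega {V : Type*} (m : ℕ) (G : SimpleGraph V) : ℤ :=
  m * (Set.range (mComp m G)).ncard - crossE m G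

/-!
Take a packing `F` of `m` edge-disjoint forests of `G` with as many edges as possible. If `F`
covers every edge of `G`, then `|E(G)| ≥ m (|V| - 1)` forces every forest to be a spanning tree.
Otherwise call an edge free if it is left uncovered by some maximum packing that `F` reaches by
swaps changing one forest at a time. By maximality the ends of a free edge are connected in
every forest, and exchanging a free edge into a forest frees the whole forest path between its
ends; following the swaps back to `F`, the ends of a free edge are joined in every forest of `F`
by a path of free edges. So on the vertex set `U` of a component of the graph of free edges,
which contains an uncovered edge, every forest of `F` induces a spanning tree of `G[U]`.
-/

namespace SimpleGraph

variable {V ι : Type*}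

theorem Reachable.of_forall_adj {G H : SimpleGraph V}
    (h : ∀ ⦃a b⦄, G.Adj a b → H.Reachable a b) {u v : V} (huv : G.Reachable u v) :
    H.Reachable u v := by
  rw [reachable_eq_reflTransGen] at h huv ⊢
  exact Relation.reflTransGen_closed h _ _ huv

theorem IsAcyclic.not_reachable_deleteEdges_of_mem_edges {F : SimpleGraph V}
    (hF : F.IsAcyclic) {u v : V} {p : F.Walk u v} (hp : p.IsPath) {f : Sym2 V}
    (hf : f ∈ p.edges) : ¬ (F.deleteEdges {f}).Reachable u v := by
  classical
  obtain ⟨a, b⟩ := f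
  rw [reachable_deleteEdges_iff_exists_walk]
  rintro ⟨q, hq⟩
  have hpq : p = q.bypass :=
    congrArg Subtype.val ((hF.subsingleton_path u v).elim ⟨p, hp⟩ q.toPath)
  exact hq (q.edges_bypass_subset_edges (hpq ▸ hf))

theorem IsAcyclic.deleteEdges_sup_edge {F : SimpleGraph V} (hF : F.IsAcyclic) {u v : V}
    {p : F.Walk u v} (hp : p.IsPath) {f : Sym2 V} (hf : f ∈ p.edges) :
    (F.deleteEdges {f} ⊔ edge u v).IsAcyclic :=
  (hF.anti (deleteEdges_le _)).sup_edge_of_not_reachable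
    (hF.not_reachable_deleteEdges_of_mem_edges hp hf)

theorem IsAcyclic.ncard_edgeSet_add_one_le [Finite V] [Nonempty V] {F : SimpleGraph V}
    (hF : F.IsAcyclic) : F.edgeSet.ncard + 1 ≤ Nat.card V := by
  obtain ⟨T, hFT, -, hT⟩ := connected_top.exists_isTree_le_of_le_of_isAcyclic le_top hF
  rw [← (isTree_iff_connected_and_card.mp hT).2, Nat.card_coe_set_eq]
  exact Nat.add_le_add_right (Set.ncard_le_ncard (edgeSet_mono hFT)) 1

theorem IsAcyclic.connected_of_card_le [Finite V] [Nonempty V] {F : SimpleGraph V}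
    (hF : F.IsAcyclic) (hcard : Nat.card V ≤ F.edgeSet.ncard + 1) : F.Connected := by
  obtain ⟨T, hFT, -, hT⟩ := connected_top.exists_isTree_le_of_le_of_isAcyclic le_top hF
  have hTcard := (isTree_iff_connected_and_card.mp hT).2
  rw [Nat.card_coe_set_eq] at hTcard
  have : F.edgeSet = T.edgeSet :=
    Set.eq_of_subset_of_ncard_le (edgeSet_mono hFT) (by omega)
  exact edgeSet_inj.mp this ▸ hT.connected

variable (G : SimpleGraph V)

structure IsForestPacking (F : ι → SimpleGraph V) : Prop where
  le : ∀ i, F i ≤ G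
  isAcyclic : ∀ i, (F i).IsAcyclic
  pairwise_disjoint : Pairwise fun i j => Disjoint (F i).edgeSet (F j).edgeSet

noncomputable def packingSize [Fintype ι] (F : ι → SimpleGraph V) : ℕ :=
  ∑ i, (F i).edgeSet.ncard

def IsMaxForestPacking [Fintype ι] (F : ι → SimpleGraph V) : Prop :=
  G.IsForestPacking F ∧
    ∀ F' : ι → SimpleGraph V, G.IsForestPacking F' → packingSize F' ≤ packingSize F

variable {G}

theorem IsForestPacking.update [DecidableEq ι] {F : ι → SimpleGraph V}
    (hF : G.IsForestPacking F) {i : ι} {H : SimpleGraph V} {e : Sym2 V} (hHG : H ≤ G)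
    (hH : H.IsAcyclic) (hHe : H.edgeSet ⊆ insert e (F i).edgeSet)
    (he : ∀ j, e ∉ (F j).edgeSet) : G.IsForestPacking (Function.update F i H) := by
  have hdisj : ∀ j, j ≠ i → Disjoint H.edgeSet (F j).edgeSet := fun j hj =>
    Set.disjoint_of_subset_left hHe
      (Set.disjoint_insert_left.mpr ⟨he j, hF.pairwise_disjoint hj.symm⟩)
  refine ⟨fun j => ?_, fun j => ?_, fun j k hjk => ?_⟩
  · rcases eq_or_ne j i with rfl | hj
    · simpa using hHG
    · simpa [hj] using hF.le j
  · rcases eq_or_ne j i with rfl | hj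
    · simpa using hH
    · simpa [hj] using hF.isAcyclic j
  · by_cases hj : j = i <;> by_cases hk : k = i
    · exact absurd (hj.trans hk.symm) hjk
    · subst hj; simpa [hk] using hdisj k hk
    · subst hk; simpa [hj] using (hdisj j hj).symm
    · simpa [hj, hk] using hF.pairwise_disjoint hjk

theorem packingSize_update [Fintype ι] [DecidableEq ι] (F : ι → SimpleGraph V) (i : ι)
    (H : SimpleGraph V) :
    packingSize (Function.update F i H) + (F i).edgeSet.ncard =
      packingSize F + H.edgeSet.ncard := by
  simp only [packingSize]
  rw [← Finset.sum_erase_add _ _ (Finset.mem_univ i),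
    ← Finset.sum_erase_add _ (fun j => (F j).edgeSet.ncard) (Finset.mem_univ i),
    Function.update_self, Finset.sum_congr rfl fun j hj => by
      rw [Function.update_of_ne (Finset.ne_of_mem_erase hj)]]
  ring

theorem IsForestPacking.connected_of_card_mul_le [Fintype ι] [Finite V] [Nonempty V]
    {F : ι → SimpleGraph V} (hF : G.IsForestPacking F)
    (hsize : Fintype.card ι * (Nat.card V - 1) ≤ packingSize F) (i : ι) : (F i).Connected := by
  have hle : ∀ j ∈ Finset.univ, (F j).edgeSet.ncard ≤ Nat.card V - 1 := fun j _ => by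
    have := (hF.isAcyclic j).ncard_edgeSet_add_one_le
    omega
  have heq : ∑ j, (F j).edgeSet.ncard = ∑ _ : ι, (Nat.card V - 1) :=
    le_antisymm (Finset.sum_le_sum hle) (by simpa [packingSize] using hsize)
  have hi := (Finset.sum_eq_sum_iff_of_le hle).mp heq i (Finset.mem_univ i)
  exact (hF.isAcyclic i).connected_of_card_le (by omega)

theorem IsForestPacking.exists_isTreeConn_subgraph {m : ℕ} {F : Fin m → SimpleGraph V}
    (hF : G.IsForestPacking F) {U : Set V} (hU : 2 ≤ U.ncard)
    (hconn : ∀ i, ((F i).induce U).Connected) :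
    ∃ H : G.Subgraph, 2 ≤ H.verts.ncard ∧ IsTreeConn m H.coe := by
  refine ⟨(⊤ : G.Subgraph).induce U, hU, fun i => (F i).induce U,
    fun i a b hab => ⟨a.2, b.2, hF.le i hab⟩, fun i => ⟨hconn i, (hF.isAcyclic i).induce U⟩,
    fun i j hij => Set.disjoint_left.mpr fun e hi hj => ?_⟩
  induction e using Sym2.ind with
  | _ a b =>
    exact Set.disjoint_left.mp (hF.pairwise_disjoint hij)
      (show s(a.1, b.1) ∈ (F i).edgeSet from hi) hj

section Swaps

variable [Fintype ι]

theorem exists_isMaxForestPacking [Finite V] (G : SimpleGraph V) :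
    ∃ F : ι → SimpleGraph V, G.IsMaxForestPacking F := by
  have hbot : G.IsForestPacking fun _ : ι => (⊥ : SimpleGraph V) :=
    ⟨fun _ => bot_le, fun _ => isAcyclic_bot, fun _ _ _ => by simp⟩
  obtain ⟨F, hF, hmax⟩ := Set.exists_max_image {F : ι → SimpleGraph V | G.IsForestPacking F}
    packingSize (Set.toFinite _) ⟨_, hbot⟩
  exact ⟨F, hF, hmax⟩

variable (G) in
def IsSwap (F F' : ι → SimpleGraph V) : Prop :=
  G.IsMaxForestPacking F ∧ G.IsMaxForestPacking F' ∧ ∃ i, ∀ j, j ≠ i → F j = F' j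

variable (G) in
def freeGraph (F₀ : ι → SimpleGraph V) : SimpleGraph V :=
  fromEdgeSet {e | e ∈ G.edgeSet ∧
    ∃ F, Relation.ReflTransGen G.IsSwap F₀ F ∧ ∀ i, e ∉ (F i).edgeSet}

variable {F₀ F F' : ι → SimpleGraph V}

theorem IsSwap.symm (h : G.IsSwap F F') : G.IsSwap F' F :=
  ⟨h.2.1, h.1, h.2.2.imp fun _ hi j hj => (hi j hj).symm⟩

theorem IsMaxForestPacking.of_reflTransGen (hF₀ : G.IsMaxForestPacking F₀)
    (h : Relation.ReflTransGen G.IsSwap F₀ F) : G.IsMaxForestPacking F := by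
  cases h with
  | refl => exact hF₀
  | tail _ hstep => exact hstep.2.1

theorem mem_edgeSet_freeGraph {e : Sym2 V} :
    e ∈ (G.freeGraph F₀).edgeSet ↔
      e ∈ G.edgeSet ∧
        ∃ F, Relation.ReflTransGen G.IsSwap F₀ F ∧ ∀ i, e ∉ (F i).edgeSet := by
  rw [freeGraph, edgeSet_fromEdgeSet]
  exact ⟨fun h => h.1, fun h => ⟨h, G.not_isDiag_of_mem_edgeSet h.1⟩⟩

theorem freeGraph_adj {u v : V} :
    (G.freeGraph F₀).Adj u v ↔
      G.Adj u v ∧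
        ∃ F, Relation.ReflTransGen G.IsSwap F₀ F ∧ ∀ i, s(u, v) ∉ (F i).edgeSet :=
  mem_edgeSet_freeGraph (e := s(u, v))

theorem freeGraph_le : G.freeGraph F₀ ≤ G := fun _ _ h => (freeGraph_adj.mp h).1

variable [DecidableEq ι]

theorem IsMaxForestPacking.reachable_of_forall_notMem [Finite V] (hF : G.IsMaxForestPacking F)
    {u v : V} (huv : G.Adj u v) (hfree : ∀ j, s(u, v) ∉ (F j).edgeSet) (i : ι) :
    (F i).Reachable u v := by
  by_contra hnr
  have hedges : (F i ⊔ edge u v).edgeSet = insert s(u, v) (F i).edgeSet := by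
    rw [edgeSet_sup, edgeSet_edge_of_ne huv.ne, Set.union_singleton]
  have hpack : G.IsForestPacking (Function.update F i (F i ⊔ edge u v)) :=
    hF.1.update (sup_le (hF.1.le i) (G.edge_le_iff.mpr (Or.inr huv)))
      ((hF.1.isAcyclic i).sup_edge_of_not_reachable hnr) hedges.subset hfree
  have hsize := packingSize_update F i (F i ⊔ edge u v)
  rw [hedges, Set.ncard_insert_of_notMem (hfree i)] at hsize
  have := hF.2 _ hpack
  omega

theorem IsMaxForestPacking.exchange (hF : G.IsMaxForestPacking F) {u v : V}
    (huv : G.Adj u v) (hfree : ∀ j, s(u, v) ∉ (F j).edgeSet) {i : ι} {p : (F i).Walk u v}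
    (hp : p.IsPath) {f : Sym2 V} (hf : f ∈ p.edges) :
    G.IsMaxForestPacking (Function.update F i ((F i).deleteEdges {f} ⊔ edge u v)) ∧
      ∀ j, f ∉ (Function.update F i ((F i).deleteEdges {f} ⊔ edge u v) j).edgeSet := by
  set H := (F i).deleteEdges {f} ⊔ edge u v
  have hfF : f ∈ (F i).edgeSet := p.edges_subset_edgeSet hf
  have hedges : H.edgeSet = insert s(u, v) ((F i).edgeSet \ {f}) := by
    rw [edgeSet_sup, edgeSet_deleteEdges, edgeSet_edge_of_ne huv.ne, Set.union_singleton]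
  have hHG : H ≤ G :=
    sup_le ((deleteEdges_le _).trans (hF.1.le i)) (G.edge_le_iff.mpr (Or.inr huv))
  have hpack : G.IsForestPacking (Function.update F i H) :=
    hF.1.update hHG ((hF.1.isAcyclic i).deleteEdges_sup_edge hp hf)
      (hedges ▸ Set.insert_subset_insert Set.sdiff_subset) hfree
  have hsize := packingSize_update F i H
  rw [hedges, Set.ncard_exchange (hfree i) hfF] at hsize
  refine ⟨⟨hpack, fun F' hF' => by have := hF.2 F' hF'; omega⟩, fun j => ?_⟩
  rcases eq_or_ne j i with rfl | hj
  · rw [Function.update_self, hedges]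
    rintro (rfl | ⟨-, hff⟩)
    · exact hfree j hfF
    · exact hff rfl
  · rw [Function.update_of_ne hj]
    exact fun hfj => Set.disjoint_left.mp (hF.1.pairwise_disjoint hj.symm) hfF hfj

variable [Finite V]

/-- Swapping an uncovered edge into a forest frees every edge of the forest path it closes. -/
theorem reachable_inf_freeGraph_of_forall_notMem (hF₀F : Relation.ReflTransGen G.IsSwap F₀ F)
    (hF : G.IsMaxForestPacking F) {u v : V} (huv : G.Adj u v)
    (hfree : ∀ j, s(u, v) ∉ (F j).edgeSet) (i : ι) :
    (F i ⊓ G.freeGraph F₀).Reachable u v := by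
  classical
  obtain ⟨q⟩ := hF.reachable_of_forall_notMem huv hfree i
  refine ⟨q.bypass.transfer _ fun f hf => ?_⟩
  have hfF : f ∈ (F i).edgeSet := q.bypass.edges_subset_edgeSet hf
  obtain ⟨hswap, hf'⟩ := hF.exchange huv hfree q.bypass_isPath hf
  rw [edgeSet_inf]
  exact ⟨hfF, mem_edgeSet_freeGraph.mpr ⟨edgeSet_mono (hF.1.le i) hfF, _,
    hF₀F.tail ⟨hF, hswap, i, fun j hj => (Function.update_of_ne hj _ _).symm⟩, hf'⟩⟩

theorem IsSwap.reachable_inf_freeGraph (hswap : G.IsSwap F F')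
    (hF' : Relation.ReflTransGen G.IsSwap F₀ F') {i : ι} {u v : V}
    (h : (F i ⊓ G.freeGraph F₀).Reachable u v) : (F' i ⊓ G.freeGraph F₀).Reachable u v := by
  obtain ⟨hF, hF'max, l, hl⟩ := hswap
  refine h.of_forall_adj fun a b hab => ?_
  by_cases hab' : (F' i).Adj a b
  · exact Adj.reachable ⟨hab', hab.2⟩
  -- the swap replaced the forest `F i` and removed `ab`, which no other forest contains
  have hil : i = l := by_contra fun hil => hab' (hl i hil ▸ hab.1)
  subst hil
  refine reachable_inf_freeGraph_of_forall_notMem hF' hF'max (freeGraph_le hab.2) (fun j => ?_) i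
  rcases eq_or_ne j i with rfl | hj
  · exact hab'
  · exact hl j hj ▸ fun hj' => Set.disjoint_left.mp (hF.1.pairwise_disjoint hj) hj' hab.1

theorem reachable_inf_freeGraph_of_adj (hF₀ : G.IsMaxForestPacking F₀)
    (hF : Relation.ReflTransGen G.IsSwap F₀ F) {u v : V} (huv : (G.freeGraph F₀).Adj u v)
    (i : ι) : (F i ⊓ G.freeGraph F₀).Reachable u v := by
  obtain ⟨hG, Fw, hw, hfree⟩ := freeGraph_adj.mp huv
  have hwF : Relation.ReflTransGen G.IsSwap Fw F :=
    (Relation.ReflTransGen.mono (fun _ _ h => IsSwap.symm h) _ _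
      (Relation.ReflTransGen.swap _ _ hw)).trans hF
  clear hF
  induction hwF with
  | refl => exact reachable_inf_freeGraph_of_forall_notMem hw (hF₀.of_reflTransGen hw) hG hfree i
  | tail hwc hstep ih => exact hstep.reachable_inf_freeGraph (hw.trans (hwc.tail hstep)) ih

theorem IsMaxForestPacking.connected_induce_supp_freeGraph (hF₀ : G.IsMaxForestPacking F₀)
    (x : V) (i : ι) :
    ((F₀ i).induce ((G.freeGraph F₀).connectedComponentMk x).supp).Connected := by
  set D := G.freeGraph F₀
  set H := F₀ i ⊓ D
  have hreach : ∀ a b, H.Reachable a b ↔ D.Reachable a b := fun a b =>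
    ⟨fun h => h.mono inf_le_right, fun h => h.of_forall_adj fun c d hcd =>
      reachable_inf_freeGraph_of_adj hF₀ .refl hcd i⟩
  have hsupp : (D.connectedComponentMk x).supp = (H.connectedComponentMk x).supp := by
    ext y
    simp only [ConnectedComponent.mem_supp_iff, ConnectedComponent.eq, hreach]
  rw [hsupp]
  refine (ConnectedComponent.maximal_connected_induce_supp (H.connectedComponentMk x)).prop.mono ?_
  exact fun _ _ hab => hab.1

end Swaps

end SimpleGraph

theorem stmt7_general {V : Type*} [Fintype V] (m : ℕ) (G : SimpleGraph V)
    (hV : 2 ≤ Fintype.card V)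
    (hE : m * (Fintype.card V - 1) ≤ G.edgeSet.ncard) :
    ∃ H : G.Subgraph, 2 ≤ H.verts.ncard ∧ IsTreeConn m H.coe := by
  classical
  obtain ⟨F, hF⟩ := G.exists_isMaxForestPacking (ι := Fin m)
  by_cases hcov : G.edgeSet ⊆ ⋃ i, (F i).edgeSet
  · have : Nonempty V := Fintype.card_pos_iff.mp (by omega)
    have hsize : Fintype.card (Fin m) * (Nat.card V - 1) ≤ packingSize F := by
      rw [Fintype.card_fin, Nat.card_eq_fintype_card]
      exact hE.trans ((Set.ncard_le_ncard hcov).trans (Set.ncard_iUnion_le_of_fintype _))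
    refine hF.1.exists_isTreeConn_subgraph (U := Set.univ)
      (by rwa [Set.ncard_univ, Nat.card_eq_fintype_card]) fun i => ?_
    exact (induceUnivIso _).connected_iff.mpr (hF.1.connected_of_card_mul_le hsize i)
  · obtain ⟨e, he, hfree⟩ := Set.not_subset.mp hcov
    obtain ⟨u, v⟩ := e
    have huv : (G.freeGraph F).Adj u v :=
      freeGraph_adj.mpr ⟨he, F, .refl, by simpa using hfree⟩
    refine hF.1.exists_isTreeConn_subgraph ?_ (hF.connected_induce_supp_freeGraph u)
    exact (Set.one_lt_ncard).mpr ⟨u, ConnectedComponent.connectedComponentMk_mem, v,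
      ConnectedComponent.eq.mpr huv.reachable.symm, huv.ne⟩

theorem stmt7 {V : Type*} [Fintype V] (m : ℕ) (hm : 0 < m) (G : SimpleGraph V)
    (hV : 2 ≤ Fintype.card V)
    (hE : m * (Fintype.card V - 1) ≤ G.edgeSet.ncard) :
    ∃ H : G.Subgraph, 2 ≤ H.verts.ncard ∧ IsTreeConn m H.coe :=
  stmt7_general m G hV hE
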